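/- arXiv:2004.06097 — 2 statements merged into one kernel-verified Lean document; each statement's English description precedes it below -/
import Mathlib

section
/- Let n ≥ 3 be an integer. Every finite set S ⊂ ℝ² in general position that is semisaturated for convex n-sets has at least 2n − 4 points. -/
/-- `S` is in general position in the plane: no three of its points are collinear. -/
def GenPos (S : Finset (ℝ × ℝ)) : Prop :=
  ∀ p ∈ S, ∀ q ∈ S, ∀ r ∈ S, p ≠ q → p ≠ r → q ≠ r →
    ¬ Collinear ℝ ({p, q, r} : Set (ℝ × ℝ))

/-- `T` is in convex position: none of its points lies in the convex hull of the others. -/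
def ConvexPos (T : Finset (ℝ × ℝ)) : Prop :=
  ∀ p ∈ T, p ∉ convexHull ℝ ((T.erase p : Finset (ℝ × ℝ)) : Set (ℝ × ℝ))

/-- `S` is semisaturated for convex `n`-sets: for every point `p ∉ S` with `S ∪ {p}` in
general position, there is an `n`-element subset of `S ∪ {p}` containing `p` that is in
convex position. -/
def ConvSemiSat (n : ℕ) (S : Finset (ℝ × ℝ)) : Prop :=
  ∀ p ∉ S, GenPos (insert p S) →
    ∃ T ⊆ insert p S, p ∈ T ∧ T.card = n ∧ ConvexPos T

noncomputable section
namespace CSS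

def cross (u v : ℝ × ℝ) : ℝ := u.1 * v.2 - u.2 * v.1

lemma collinear_of_cross_eq_zero (p q r : ℝ × ℝ) (h : cross (q - p) (r - p) = 0) :
    Collinear ℝ ({p, q, r} : Set (ℝ × ℝ)) := by
  by_cases hqp : q = p
  · subst hqp
    have h2 : ({q, q, r} : Set (ℝ × ℝ)) = {q, r} := by simp
    rw [h2]; exact collinear_pair ℝ q r
  · rw [collinear_iff_of_mem (Set.mem_insert p {q, r})]
    refine ⟨q - p, ?_⟩
    have key : ∀ x : ℝ × ℝ, cross (q - p) (x - p) = 0 → ∃ t : ℝ, x = t • (q - p) +ᵥ p := by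
      intro x hx
      simp only [cross, Prod.fst_sub, Prod.snd_sub] at hx
      by_cases ha : q.1 - p.1 ≠ 0
      · refine ⟨(x.1 - p.1) / (q.1 - p.1), ?_⟩
        have h1 : x.1 = (x.1 - p.1) / (q.1 - p.1) * (q.1 - p.1) + p.1 := by field_simp; ring
        have h2 : x.2 = (x.1 - p.1) / (q.1 - p.1) * (q.2 - p.2) + p.2 := by
          field_simp; nlinarith [hx]
        exact Prod.ext (by simpa using h1) (by simpa using h2)
      · push_neg at ha
        have hb : q.2 - p.2 ≠ 0 := by
          intro hb
          exact hqp (Prod.ext (by linarith) (by linarith))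
        refine ⟨(x.2 - p.2) / (q.2 - p.2), ?_⟩
        have h1 : x.1 = (x.2 - p.2) / (q.2 - p.2) * (q.1 - p.1) + p.1 := by
          rw [ha] at hx ⊢
          have h0 : (q.2 - p.2) * (x.1 - p.1) = 0 := by linarith
          rcases mul_eq_zero.mp h0 with h' | h'
          · exact absurd h' hb
          · simp; linarith
        have h2 : x.2 = (x.2 - p.2) / (q.2 - p.2) * (q.2 - p.2) + p.2 := by field_simp; ring
        exact Prod.ext (by simpa using h1) (by simpa using h2)
    rintro x (rfl | rfl | rfl)
    · exact ⟨0, by simp⟩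
    · exact ⟨1, by simp⟩
    · exact key x (by simpa using h)

lemma cross_eq_zero_of_collinear {p q r : ℝ × ℝ}
    (h : Collinear ℝ ({p, q, r} : Set (ℝ × ℝ))) : cross (q - p) (r - p) = 0 := by
  rw [collinear_iff_of_mem (Set.mem_insert p {q, r})] at h
  obtain ⟨v, hv⟩ := h
  obtain ⟨a, ha⟩ := hv q (by simp)
  obtain ⟨b, hb⟩ := hv r (by simp)
  have hq : q - p = a • v := by rw [ha]; simp
  have hr : r - p = b • v := by rw [hb]; simp
  rw [hq, hr]
  simp [cross]; ring

lemma mem_convexHull_triple {A B C P : ℝ × ℝ} {a b c : ℝ} (ha : 0 ≤ a) (hb : 0 ≤ b)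
    (hc : 0 ≤ c) (hsum : a + b + c = 1) (hP : P = a • A + b • B + c • C) :
    P ∈ convexHull ℝ ({A, B, C} : Set (ℝ × ℝ)) := by
  have := Finset.centerMass_mem_convexHull (t := (Finset.univ : Finset (Fin 3)))
    (s := ({A, B, C} : Set (ℝ × ℝ))) (w := ![a, b, c]) (z := ![A, B, C]) (hws := ?_) ?_ (hz := ?_)
  · convert this using 1
    rw [Finset.centerMass]
    simp [Fin.sum_univ_three, hsum, hP]
  · intro i _; fin_cases i <;> simpa
  · simp [Fin.sum_univ_three, hsum]
  · intro i _; fin_cases i <;> simp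

/-- explicit depth below which a point on the `y`-axis sees `q2` inside the triangle. -/
noncomputable def capBound (q1 q2 q3 : ℝ × ℝ) : ℝ :=
  min (q1.2 - q1.1 * (q3.2 - q1.2) / (q3.1 - q1.1))
    (min (q2.2 - q2.1 * (q3.2 - q2.2) / (q3.1 - q2.1))
      (q2.2 + q2.1 * (q1.2 - q2.2) / (q2.1 - q1.1))) - 1

lemma triangle_mem (q1 q2 q3 : ℝ × ℝ) (h12 : q1.1 < q2.1) (h23 : q2.1 < q3.1)
    (hbelow : cross (q3 - q1) (q2 - q1) < 0) (py : ℝ) (hpy : py ≤ capBound q1 q2 q3) :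
    q2 ∈ convexHull ℝ ({q1, q3, ((0 : ℝ), py)} : Set (ℝ × ℝ)) := by
  obtain ⟨x1, y1⟩ := q1
  obtain ⟨x2, y2⟩ := q2
  obtain ⟨x3, y3⟩ := q3
  simp only [cross, Prod.fst_sub, Prod.snd_sub] at hbelow
  simp only at h12 h23
  simp only [capBound] at hpy
  have h13 : (0:ℝ) < x3 - x1 := by simp at h12 h23 ⊢; linarith
  have h23' : (0:ℝ) < x3 - x2 := by simp at h23 ⊢; linarith
  have h12' : (0:ℝ) < x2 - x1 := by simp at h12 ⊢; linarith
  have hp1 : py < y1 - x1 * (y3 - y1) / (x3 - x1) := by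
    have := min_le_left (y1 - x1 * (y3 - y1) / (x3 - x1))
      (min (y2 - x2 * (y3 - y2) / (x3 - x2)) (y2 + x2 * (y1 - y2) / (x2 - x1)))
    linarith
  have hp2 : py < y2 - x2 * (y3 - y2) / (x3 - x2) := by
    have h1 := min_le_right (y1 - x1 * (y3 - y1) / (x3 - x1))
      (min (y2 - x2 * (y3 - y2) / (x3 - x2)) (y2 + x2 * (y1 - y2) / (x2 - x1)))
    have h2 := min_le_left (y2 - x2 * (y3 - y2) / (x3 - x2)) (y2 + x2 * (y1 - y2) / (x2 - x1))
    linarith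
  have hp3 : py < y2 + x2 * (y1 - y2) / (x2 - x1) := by
    have h1 := min_le_right (y1 - x1 * (y3 - y1) / (x3 - x1))
      (min (y2 - x2 * (y3 - y2) / (x3 - x2)) (y2 + x2 * (y1 - y2) / (x2 - x1)))
    have h2 := min_le_right (y2 - x2 * (y3 - y2) / (x3 - x2)) (y2 + x2 * (y1 - y2) / (x2 - x1))
    linarith
  -- key quantities
  set d : ℝ := (x3 - x1) * (py - y1) + x1 * (y3 - y1) with hd_def
  set na : ℝ := (x3 - x2) * (py - y2) + x2 * (y3 - y2) with hna_def
  set nb : ℝ := -(x2 * (y1 - y2)) + (py - y2) * (x2 - x1) with hnb_def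
  set nc : ℝ := (x1 - x2) * (y3 - y2) - (y1 - y2) * (x3 - x2) with hnc_def
  have hd : d < 0 := by
    have h' : py - y1 < -(x1 * (y3 - y1)) / (x3 - x1) := by
      rw [neg_div]; linarith
    have := (lt_div_iff₀ h13).mp h'
    nlinarith
  have hna : na < 0 := by
    have h' : py - y2 < -(x2 * (y3 - y2)) / (x3 - x2) := by
      rw [neg_div]; linarith
    have := (lt_div_iff₀ h23').mp h'
    nlinarith
  have hnb : nb < 0 := by
    have h' : py - y2 < x2 * (y1 - y2) / (x2 - x1) := by linarith
    have := (lt_div_iff₀ h12').mp h'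
    nlinarith
  have hnc : nc < 0 := by nlinarith [hbelow]
  have hdne : d ≠ 0 := ne_of_lt hd
  refine mem_convexHull_triple (a := na / d) (b := nb / d) (c := nc / d)
    ?_ ?_ ?_ ?_ ?_
  · exact le_of_lt (div_pos_of_neg_of_neg hna hd)
  · exact le_of_lt (div_pos_of_neg_of_neg hnb hd)
  · exact le_of_lt (div_pos_of_neg_of_neg hnc hd)
  · field_simp
    ring
  · apply Prod.ext <;> simp <;> field_simp <;> ring
/-- y-intercept at x=0 of the line through u and v -/
noncomputable def lineY (u v : ℝ × ℝ) : ℝ := (u.2 * v.1 - u.1 * v.2) / (v.1 - u.1)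

lemma lineY_eq {u v : ℝ × ℝ} {py : ℝ} (h : u.1 < v.1)
    (hc : cross (u - ((0:ℝ), py)) (v - ((0:ℝ), py)) = 0) : py = lineY u v := by
  rw [lineY, eq_div_iff (by linarith)]
  simp only [cross, Prod.fst_sub, Prod.snd_sub] at hc
  nlinarith [hc]

lemma capExtract (n : ℕ) (S : Finset (ℝ × ℝ)) (hS : S.Nonempty) (hgp : GenPos S)
    (hsat : ConvSemiSat n S) (hx : ∀ u ∈ S, ∀ v ∈ S, u ≠ v → u.1 ≠ v.1) :
    ∃ A ⊆ S, A.card = n - 1 ∧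
      ∀ a ∈ A, ∀ b ∈ A, ∀ c ∈ A, a.1 < b.1 → b.1 < c.1 → 0 < cross (c - a) (b - a) := by
  have hS3 : (S ×ˢ S ×ˢ S).Nonempty := hS.product (hS.product hS)
  have hS2 : (S ×ˢ S).Nonempty := hS.product hS
  set M1 : ℝ := (S ×ˢ S ×ˢ S).inf' hS3 (fun t => capBound t.1 t.2.1 t.2.2) with hM1
  set M2 : ℝ := (S ×ˢ S).inf' hS2 (fun t => lineY t.1 t.2) with hM2
  set M3 : ℝ := S.inf' hS (fun u => u.2) with hM3
  set py : ℝ := min M1 (min M2 M3) - 1 with hpy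
  set p : ℝ × ℝ := ((0:ℝ), py) with hp
  have hpyM1 : py ≤ M1 - 1 := by
    have := min_le_left M1 (min M2 M3); linarith
  have hpyM2 : py ≤ M2 - 1 := by
    have h1 := min_le_right M1 (min M2 M3); have h2 := min_le_left M2 M3; linarith
  have hpyM3 : py ≤ M3 - 1 := by
    have h1 := min_le_right M1 (min M2 M3); have h2 := min_le_right M2 M3; linarith
  have hpS : p ∉ S := by
    intro hmem
    have := Finset.inf'_le (f := fun u : ℝ × ℝ => u.2) hmem
    rw [← hM3] at this
    simp only [hp] at this
    linarith
  -- no point of S shares its x-coordinate... key: p not collinear with pairs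
  have hnc : ∀ u ∈ S, ∀ v ∈ S, u ≠ v → ¬ Collinear ℝ ({p, u, v} : Set (ℝ × ℝ)) := by
    intro u hu v hv huv hcol
    have hcr := cross_eq_zero_of_collinear hcol
    rcases lt_trichotomy u.1 v.1 with h | h | h
    · have := lineY_eq h hcr
      have h2 := Finset.inf'_le (f := fun t : (ℝ × ℝ) × (ℝ × ℝ) => lineY t.1 t.2)
        (show (u, v) ∈ S ×ˢ S from Finset.mem_product.mpr ⟨hu, hv⟩)
      rw [← hM2] at h2; simp only at h2; linarith
    · exact hx u hu v hv huv h
    · have hcr' : cross (v - p) (u - p) = 0 := by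
        simp only [cross, Prod.fst_sub, Prod.snd_sub] at hcr ⊢; linarith
      have := lineY_eq h hcr'
      have h2 := Finset.inf'_le (f := fun t : (ℝ × ℝ) × (ℝ × ℝ) => lineY t.1 t.2)
        (show (v, u) ∈ S ×ˢ S from Finset.mem_product.mpr ⟨hv, hu⟩)
      rw [← hM2] at h2; simp only at h2; linarith
  have hgen : GenPos (insert p S) := by
    intro a ha b hb c hc hab hac hbc
    rcases Finset.mem_insert.mp ha with rfl | ha' <;>
      rcases Finset.mem_insert.mp hb with rfl | hb' <;>
        rcases Finset.mem_insert.mp hc with rfl | hc'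
    · exact absurd rfl hab
    · exact absurd rfl hab
    · exact absurd rfl hac
    · exact hnc b hb' c hc' hbc
    · exact absurd rfl hbc
    · intro hcol
      exact hnc a ha' c hc' hac (by rwa [Set.insert_comm] at hcol)
    · intro hcol
      exact hnc a ha' b hb' hab
        (by rwa [Set.pair_comm b p, Set.insert_comm] at hcol)
    · exact hgp a ha' b hb' c hc' hab hac hbc
  obtain ⟨T, hTsub, hpT, hTcard, hTconv⟩ := hsat p hpS hgen
  refine ⟨T.erase p, ?_, ?_, ?_⟩
  · intro a ha
    have h1 := Finset.mem_of_mem_erase ha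
    have h2 := Finset.ne_of_mem_erase ha
    rcases Finset.mem_insert.mp (hTsub h1) with rfl | h
    · exact absurd rfl h2
    · exact h
  · rw [Finset.card_erase_of_mem hpT, hTcard]
  · intro a ha b hb c hc hab hbc
    have haS : a ∈ S := by
      rcases Finset.mem_insert.mp (hTsub (Finset.mem_of_mem_erase ha)) with rfl | h
      · exact absurd rfl (Finset.ne_of_mem_erase ha)
      · exact h
    have hbS : b ∈ S := by
      rcases Finset.mem_insert.mp (hTsub (Finset.mem_of_mem_erase hb)) with rfl | h
      · exact absurd rfl (Finset.ne_of_mem_erase hb)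
      · exact h
    have hcS : c ∈ S := by
      rcases Finset.mem_insert.mp (hTsub (Finset.mem_of_mem_erase hc)) with rfl | h
      · exact absurd rfl (Finset.ne_of_mem_erase hc)
      · exact h
    have hab' : a ≠ b := fun h => by rw [h] at hab; exact lt_irrefl _ hab
    have hbc' : b ≠ c := fun h => by rw [h] at hbc; exact lt_irrefl _ hbc
    have hac' : a ≠ c := fun h => by rw [h] at hab; exact absurd hbc (not_lt.mpr (le_of_lt hab))
    by_contra hcon
    push_neg at hcon
    have hne : cross (c - a) (b - a) ≠ 0 := by
      intro h0
      have : cross (b - a) (c - a) = 0 := by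
        simp only [cross, Prod.fst_sub, Prod.snd_sub] at h0 ⊢; linarith
      exact hgp a haS b hbS c hcS hab' hac' hbc' (collinear_of_cross_eq_zero a b c this)
    have hlt : cross (c - a) (b - a) < 0 := lt_of_le_of_ne hcon hne
    have hcap : py ≤ capBound a b c := by
      have := Finset.inf'_le (f := fun t : (ℝ × ℝ) × (ℝ × ℝ) × (ℝ × ℝ) => capBound t.1 t.2.1 t.2.2)
        (show (a, b, c) ∈ S ×ˢ S ×ˢ S from
          Finset.mem_product.mpr ⟨haS, Finset.mem_product.mpr ⟨hbS, hcS⟩⟩)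
      rw [← hM1] at this; simp only at this; linarith
    have hmem := triangle_mem a b c hab hbc hlt py hcap
    have hsub : ({a, c, p} : Set (ℝ × ℝ)) ⊆ (T.erase b : Finset (ℝ × ℝ)) := by
      intro x hxm
      rcases hxm with rfl | rfl | rfl
      · exact Finset.mem_erase.mpr ⟨hab', Finset.mem_of_mem_erase ha⟩
      · exact Finset.mem_erase.mpr ⟨Ne.symm hbc', Finset.mem_of_mem_erase hc⟩
      · exact Finset.mem_erase.mpr ⟨fun h => hpS (h ▸ hbS), hpT⟩
    have : b ∈ convexHull ℝ ((T.erase b : Finset (ℝ × ℝ)) : Set (ℝ × ℝ)) :=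
      convexHull_mono hsub hmem
    exact hTconv b (Finset.mem_of_mem_erase hb) this
lemma collinear_triple_map (g : (ℝ × ℝ) →ₗ[ℝ] (ℝ × ℝ)) {a b c : ℝ × ℝ}
    (h : Collinear ℝ ({a, b, c} : Set (ℝ × ℝ))) :
    Collinear ℝ ({g a, g b, g c} : Set (ℝ × ℝ)) := by
  rw [collinear_iff_of_mem (Set.mem_insert a {b, c})] at h
  rw [collinear_iff_of_mem (Set.mem_insert (g a) {g b, g c})]
  obtain ⟨v, hv⟩ := h
  refine ⟨g v, ?_⟩
  intro x hx
  have hx' : x ∈ ⇑g '' ({a, b, c} : Set (ℝ × ℝ)) := by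
    simpa [Set.image_insert_eq] using hx
  obtain ⟨y, hy, rfl⟩ := hx'
  obtain ⟨t, ht⟩ := hv y hy
  exact ⟨t, by rw [ht]; simp [map_add, map_smul]⟩

lemma genPos_image (f : (ℝ × ℝ) ≃ₗ[ℝ] (ℝ × ℝ)) {S : Finset (ℝ × ℝ)} (h : GenPos S) :
    GenPos (S.image f) := by
  intro p hp q hq r hr hpq hpr hqr hcol
  obtain ⟨a, ha, rfl⟩ := Finset.mem_image.mp hp
  obtain ⟨b, hb, rfl⟩ := Finset.mem_image.mp hq
  obtain ⟨c, hc, rfl⟩ := Finset.mem_image.mp hr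
  have hab : a ≠ b := fun h' => hpq (by rw [h'])
  have hac : a ≠ c := fun h' => hpr (by rw [h'])
  have hbc : b ≠ c := fun h' => hqr (by rw [h'])
  have := collinear_triple_map f.symm.toLinearMap hcol
  simp only [LinearEquiv.coe_toLinearMap, LinearEquiv.symm_apply_apply] at this
  exact h a ha b hb c hc hab hac hbc this

lemma convexPos_image (f : (ℝ × ℝ) ≃ₗ[ℝ] (ℝ × ℝ)) {T : Finset (ℝ × ℝ)} (h : ConvexPos T) :
    ConvexPos (T.image f) := by
  intro p hp
  obtain ⟨a, ha, rfl⟩ := Finset.mem_image.mp hp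
  intro hmem
  have himg : (T.image f).erase (f a) = (T.erase a).image f :=
    (Finset.image_erase f.injective T a).symm
  rw [himg] at hmem
  rw [Finset.coe_image,
    show (⇑f : ℝ × ℝ → ℝ × ℝ) = ⇑f.toLinearMap from rfl,
    ← f.toLinearMap.image_convexHull] at hmem
  obtain ⟨x, hx, hxa⟩ := hmem
  have : x = a := f.injective hxa
  exact h a ha (this ▸ hx)

lemma semiSat_image (f : (ℝ × ℝ) ≃ₗ[ℝ] (ℝ × ℝ)) {n : ℕ} {S : Finset (ℝ × ℝ)}
    (h : ConvSemiSat n S) : ConvSemiSat n (S.image f) := by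
  intro p' hp' hgen'
  set p := f.symm p' with hpdef
  have hpS : p ∉ S := by
    intro hmem
    exact hp' (Finset.mem_image.mpr ⟨p, hmem, by simp [hpdef]⟩)
  have himg : (insert p S).image f = insert p' (S.image f) := by
    rw [Finset.image_insert]; simp [hpdef]
  have hgen : GenPos (insert p S) := by
    have h2 := genPos_image f.symm hgen'
    have h3 : (insert p' (S.image f)).image f.symm = insert p S := by
      rw [Finset.image_insert, Finset.image_image, ← hpdef]
      congr 1
      have : (⇑f.symm ∘ ⇑f) = id := by funext x; simp
      rw [this, Finset.image_id]
    rwa [h3] at h2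
  obtain ⟨T, hTsub, hpT, hTcard, hTconv⟩ := h p hpS hgen
  refine ⟨T.image f, ?_, ?_, ?_, convexPos_image f hTconv⟩
  · rw [← himg]; exact Finset.image_subset_image hTsub
  · exact Finset.mem_image.mpr ⟨p, hpT, by simp [hpdef]⟩
  · rw [Finset.card_image_of_injective _ f.injective, hTcard]

/-- shear map -/
noncomputable def shear (ε : ℝ) : (ℝ × ℝ) ≃ₗ[ℝ] (ℝ × ℝ) where
  toFun u := (u.1 + ε * u.2, u.2)
  invFun u := (u.1 - ε * u.2, u.2)
  map_add' u v := by simp [Prod.ext_iff] <;> ring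
  map_smul' t u := by simp [Prod.ext_iff] <;> ring
  left_inv u := by simp
  right_inv u := by simp

/-- reflection in the x-axis -/
noncomputable def negy : (ℝ × ℝ) ≃ₗ[ℝ] (ℝ × ℝ) where
  toFun u := (u.1, -u.2)
  invFun u := (u.1, -u.2)
  map_add' u v := by simp [Prod.ext_iff] <;> ring
  map_smul' t u := by simp [Prod.ext_iff] <;> ring
  left_inv u := by simp
  right_inv u := by simp

end CSS
end

section
open CSS

/-- For `n ≥ 3`, every finite planar point set in general position that is semisaturated for
convex `n`-sets has at least `2n - 4` points. -/
theorem convex_semisat_lower_bound (n : ℕ) (hn : 3 ≤ n)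
    (S : Finset (ℝ × ℝ)) (hgp : GenPos S) (hsat : ConvSemiSat n S) :
    2 * n - 4 ≤ S.card := by
  rcases S.eq_empty_or_nonempty with rfl | hS
  · exfalso
    have hgen : GenPos (insert ((0:ℝ), (0:ℝ)) (∅ : Finset (ℝ × ℝ))) := by
      intro a ha b hb c hc hab hac hbc
      simp only [Finset.mem_insert, Finset.notMem_empty, or_false] at ha hb hc
      exact absurd (ha.trans hb.symm) hab
    obtain ⟨T, hT, hpT, hcard, -⟩ := hsat ((0:ℝ), (0:ℝ)) (by simp) hgen
    have h1 : T.card ≤ 1 := by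
      have := Finset.card_le_card hT
      simpa using this
    omega
  -- choose a generic shear parameter
  · set Bad : Finset ℝ := (S ×ˢ S).image (fun t => (t.1.1 - t.2.1) / (t.2.2 - t.1.2)) with hBad
    obtain ⟨ε, hε⟩ := Infinite.exists_notMem_finset Bad
    set f := shear ε with hf
    set S₁ := S.image f with hS₁def
    have hS₁ : S₁.Nonempty := hS.image f
    have hfx : ∀ a : ℝ × ℝ, (f a).1 = a.1 + ε * a.2 := fun a => rfl
    have hx₁ : ∀ u ∈ S₁, ∀ v ∈ S₁, u ≠ v → u.1 ≠ v.1 := by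
      intro u hu v hv huv
      obtain ⟨a, ha, rfl⟩ := Finset.mem_image.mp hu
      obtain ⟨b, hb, rfl⟩ := Finset.mem_image.mp hv
      have hab : a ≠ b := fun h => huv (by rw [h])
      rw [hfx, hfx]
      intro heq
      by_cases h2 : a.2 = b.2
      · refine absurd (Prod.ext ?_ h2) hab
        have h3 : ε * a.2 = ε * b.2 := by rw [h2]
        linarith
      · apply hε
        rw [hBad]
        refine Finset.mem_image.mpr ⟨(a, b), Finset.mem_product.mpr ⟨ha, hb⟩, ?_⟩
        have hne : b.2 - a.2 ≠ 0 := fun h => h2 (by linarith)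
        field_simp
        linarith
    have hgp₁ : GenPos S₁ := genPos_image f hgp
    have hsat₁ : ConvSemiSat n S₁ := semiSat_image f hsat
    obtain ⟨A, hAsub, hAcard, hAcap⟩ := capExtract n S₁ hS₁ hgp₁ hsat₁ hx₁
    -- reflected copy
    set S₂ := S₁.image negy with hS₂def
    have hnegyx : ∀ a : ℝ × ℝ, (negy a).1 = a.1 := fun a => rfl
    have hnegyinv : ∀ a : ℝ × ℝ, negy (negy a) = a := fun a => by
      simp [negy, LinearEquiv.coe_mk]
    have hx₂ : ∀ u ∈ S₂, ∀ v ∈ S₂, u ≠ v → u.1 ≠ v.1 := by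
      intro u hu v hv huv
      obtain ⟨a, ha, rfl⟩ := Finset.mem_image.mp hu
      obtain ⟨b, hb, rfl⟩ := Finset.mem_image.mp hv
      have hab : a ≠ b := fun h => huv (by rw [h])
      rw [hnegyx, hnegyx]
      exact hx₁ a ha b hb hab
    obtain ⟨A₂, hA₂sub, hA₂card, hA₂cap⟩ := capExtract n S₂ (hS₁.image negy)
      (genPos_image negy hgp₁) (semiSat_image negy hsat₁) hx₂
    set B : Finset (ℝ × ℝ) := A₂.image negy with hBdef
    have hBsub : B ⊆ S₁ := by
      intro x hx
      obtain ⟨a, ha, rfl⟩ := Finset.mem_image.mp hx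
      obtain ⟨b, hb, rfl⟩ := Finset.mem_image.mp (hA₂sub ha)
      rw [hnegyinv]; exact hb
    have hBcard : B.card = n - 1 := by
      rw [hBdef, Finset.card_image_of_injective _ negy.injective, hA₂card]
    have hBcup : ∀ a ∈ B, ∀ b ∈ B, ∀ c ∈ B, a.1 < b.1 → b.1 < c.1 →
        cross (c - a) (b - a) < 0 := by
      intro a ha b hb c hc hab hbc
      obtain ⟨a', ha', rfl⟩ := Finset.mem_image.mp ha
      obtain ⟨b', hb', rfl⟩ := Finset.mem_image.mp hb
      obtain ⟨c', hc', rfl⟩ := Finset.mem_image.mp hc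
      rw [hnegyx] at hab hbc
      have hpos := hA₂cap a' ha' b' hb' c' hc' hab hbc
      have : cross (negy c' - negy a') (negy b' - negy a') = - cross (c' - a') (b' - a') := by
        simp [cross, negy, LinearEquiv.coe_mk, Prod.fst_sub, Prod.snd_sub]
        ring
      rw [this]
      linarith
    have hint : (A ∩ B).card ≤ 2 := by
      by_contra hcon
      push_neg at hcon
      obtain ⟨t, hts, htc⟩ := Finset.exists_subset_card_eq (s := A ∩ B) (n := 3) hcon
      obtain ⟨a, b, c, hab, hac, hbc, rfl⟩ := Finset.card_eq_three.mp htc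
      have haA : a ∈ A := (Finset.mem_inter.mp (hts (by simp))).1
      have haB : a ∈ B := (Finset.mem_inter.mp (hts (by simp))).2
      have hbA : b ∈ A := (Finset.mem_inter.mp (hts (by simp))).1
      have hbB : b ∈ B := (Finset.mem_inter.mp (hts (by simp))).2
      have hcA : c ∈ A := (Finset.mem_inter.mp (hts (by simp))).1
      have hcB : c ∈ B := (Finset.mem_inter.mp (hts (by simp))).2
      have hxab : a.1 ≠ b.1 := hx₁ a (hAsub haA) b (hAsub hbA) hab
      have hxac : a.1 ≠ c.1 := hx₁ a (hAsub haA) c (hAsub hcA) hac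
      have hxbc : b.1 ≠ c.1 := hx₁ b (hAsub hbA) c (hAsub hcA) hbc
      rcases lt_or_gt_of_ne hxab with h1 | h1 <;> rcases lt_or_gt_of_ne hxac with h2 | h2 <;>
        rcases lt_or_gt_of_ne hxbc with h3 | h3
      · linarith [hAcap a haA b hbA c hcA h1 h3, hBcup a haB b hbB c hcB h1 h3]
      · linarith [hAcap a haA c hcA b hbA h2 h3, hBcup a haB c hcB b hbB h2 h3]
      · linarith
      · linarith [hAcap c hcA a haA b hbA h2 h1, hBcup c hcB a haB b hbB h2 h1]
      · linarith [hAcap b hbA a haA c hcA h1 h2, hBcup b hbB a haB c hcB h1 h2]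
      · linarith
      · linarith [hAcap b hbA c hcA a haA h3 h2, hBcup b hbB c hcB a haB h3 h2]
      · linarith [hAcap c hcA b hbA a haA h3 h1, hBcup c hcB b hbB a haB h3 h1]
    have hunion : (A ∪ B).card ≤ S₁.card :=
      Finset.card_le_card (Finset.union_subset hAsub hBsub)
    have hsum := Finset.card_union_add_card_inter A B
    have hScard : S₁.card = S.card := Finset.card_image_of_injective _ f.injective
    omega

end
end

section
/- Let n ≥ 4 be an integer. There exists a finite set S ⊂ ℝ² in general position with exactly 2n − 4 points that is semisaturated for convex n-sets (for example, the vertex set of a convex (2n−4)-gon whose opposite sides are parallel). -/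
open Real Finset


namespace ConvSatAux

/-- coordinate dot product on ℝ × ℝ -/
def dot (x u : ℝ × ℝ) : ℝ := x.1 * u.1 + x.2 * u.2

lemma isLinearMap_dot (u : ℝ × ℝ) : IsLinearMap ℝ (fun x : ℝ × ℝ => dot x u) := by
  constructor
  · intro x y; simp [dot]; ring
  · intro c x; simp [dot, smul_eq_mul]; ring

lemma dot_neg (x u : ℝ × ℝ) : dot x (-u) = -dot x u := by
  simp [dot]; ring

/-- Key separation lemma: if all of `X` lies in a half plane `dot · u ≤ r`, at most one
point of `X` attains `r`, and `x ∈ convexHull X` attains `r`, then `x ∈ X`. -/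
lemma sep_lemma (X : Finset (ℝ × ℝ)) (u : ℝ × ℝ) (r : ℝ)
    (hle : ∀ y ∈ X, dot y u ≤ r)
    (huniq : ∀ y ∈ X, ∀ z ∈ X, dot y u = r → dot z u = r → y = z)
    (x : ℝ × ℝ) (hx : dot x u = r) (hmem : x ∈ convexHull ℝ (X : Set (ℝ × ℝ))) :
    x ∈ X := by
  rw [Finset.mem_convexHull'] at hmem
  obtain ⟨w, hw0, hw1, hwx⟩ := hmem
  have hsum : ∑ y ∈ X, w y * dot y u = r := by
    have h1 : dot (∑ y ∈ X, w y • y) u = ∑ y ∈ X, w y * dot y u := by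
      simp only [dot, Prod.fst_sum, Prod.snd_sum, Prod.smul_fst, Prod.smul_snd, smul_eq_mul,
        Finset.sum_mul, ← Finset.sum_add_distrib]
      exact Finset.sum_congr rfl fun y _ => by ring
    rw [hwx] at h1; rw [← h1, hx]
  have hzero : ∑ y ∈ X, w y * (r - dot y u) = 0 := by
    simp only [mul_sub, Finset.sum_sub_distrib, ← Finset.sum_mul, hw1, hsum]; ring
  have hterm : ∀ y ∈ X, w y ≠ 0 → dot y u = r := by
    intro y hy hwy
    have h0 : w y * (r - dot y u) = 0 := by
      have := (Finset.sum_eq_zero_iff_of_nonneg (fun y hy => by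
        have := hle y hy; have := hw0 y hy; nlinarith)).1 hzero y hy
      exact this
    rcases mul_eq_zero.1 h0 with h | h
    · exact absurd h hwy
    · linarith
  obtain ⟨y0, hy0, hwy0⟩ : ∃ y0 ∈ X, w y0 ≠ 0 := by
    by_contra hcon
    push_neg at hcon
    rw [Finset.sum_eq_zero (fun y hy => hcon y hy)] at hw1
    norm_num at hw1
  have hxy0 : x = y0 := by
    rw [← hwx]
    have : ∀ y ∈ X, w y • y = w y • y0 := by
      intro y hy
      by_cases hwy : w y = 0
      · simp [hwy]
      · rw [huniq y hy y0 hy0 (hterm y hy hwy) (hterm y0 hy0 hwy0)]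
    rw [Finset.sum_congr rfl this, ← Finset.sum_smul, hw1, one_smul]
  rw [hxy0]; exact hy0

lemma hull_le {X : Finset (ℝ × ℝ)} {u : ℝ × ℝ} {r : ℝ} (h : ∀ y ∈ X, dot y u ≤ r) :
    ∀ x ∈ convexHull ℝ (X : Set (ℝ × ℝ)), dot x u ≤ r := by
  intro x hx
  exact convexHull_min (fun y hy => h y (Finset.mem_coe.1 hy))
    (convex_halfSpace_le (isLinearMap_dot u) r) hx

lemma collinear_of_dot {u : ℝ × ℝ} (hu : u ≠ 0) {r : ℝ} {a b c : ℝ × ℝ}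
    (ha : dot a u = r) (hb : dot b u = r) (hc : dot c u = r) :
    Collinear ℝ ({a, b, c} : Set (ℝ × ℝ)) := by
  have hmem : a ∈ ({a, b, c} : Set (ℝ × ℝ)) := by simp
  rw [collinear_iff_of_mem hmem]
  refine ⟨(-u.2, u.1), ?_⟩
  intro p hp
  have hdp : dot p u = r := by
    simp only [Set.mem_insert_iff, Set.mem_singleton_iff] at hp
    rcases hp with rfl | rfl | rfl <;> assumption
  have key : (p.1 - a.1) * u.1 + (p.2 - a.2) * u.2 = 0 := by
    have : dot p u - dot a u = 0 := by rw [hdp, ha]; ring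
    simp only [dot] at this; linarith
  have hstep : ∀ t : ℝ, t • ((-u.2 : ℝ), (u.1 : ℝ)) +ᵥ a = (t * (-u.2) + a.1, t * u.1 + a.2) := by
    intro t; simp [Prod.ext_iff, smul_eq_mul]
  by_cases h1 : u.1 = 0
  · have h2 : u.2 ≠ 0 := by
      intro h2; exact hu (Prod.ext h1 h2)
    refine ⟨(a.1 - p.1) / u.2, ?_⟩
    rw [hstep, Prod.ext_iff]
    constructor
    · field_simp; ring
    · rw [h1] at key ⊢
      have h3 : (p.2 - a.2) * u.2 = 0 := by nlinarith [key]
      rcases mul_eq_zero.1 h3 with h | h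
      · have : p.2 = a.2 := by linarith
        simp [this]
      · exact absurd h h2
  · refine ⟨(p.2 - a.2) / u.1, ?_⟩
    rw [hstep, Prod.ext_iff]
    constructor
    · field_simp
      nlinarith [key]
    · field_simp
      ring


noncomputable def pt (m j : ℕ) : ℝ × ℝ := (Real.cos (2*π*j/m), Real.sin (2*π*j/m))

noncomputable def ed (m k : ℕ) : ℝ × ℝ := (Real.cos (π*(2*k+1)/m), Real.sin (π*(2*k+1)/m))

lemma dot_cis (x y : ℝ) :
    dot (Real.cos x, Real.sin x) (Real.cos y, Real.sin y) = Real.cos (x - y) := by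
  simp [dot, Real.cos_sub]

lemma pt_mod (m : ℕ) (hm : m ≠ 0) (j : ℕ) : pt m (j % m) = pt m j := by
  have hm' : (m:ℝ) ≠ 0 := Nat.cast_ne_zero.2 hm
  have hj : (j:ℝ) = (j % m : ℕ) + (j / m : ℕ) * m := by
    exact_mod_cast (Nat.mod_add_div' j m).symm
  have hang : 2*π*(j:ℝ)/m = 2*π*(j % m : ℕ)/m + (j / m : ℕ) * (2*π) := by
    rw [hj]; field_simp
  unfold pt
  rw [hang, Real.cos_add_nat_mul_two_pi, Real.sin_add_nat_mul_two_pi]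

lemma ed_mod (m : ℕ) (hm : m ≠ 0) (j : ℕ) : ed m (j % m) = ed m j := by
  have hm' : (m:ℝ) ≠ 0 := Nat.cast_ne_zero.2 hm
  have hj : (j:ℝ) = (j % m : ℕ) + (j / m : ℕ) * m := by
    exact_mod_cast (Nat.mod_add_div' j m).symm
  have hang : π*(2*(j:ℝ)+1)/m = π*(2*(j % m : ℕ)+1)/m + (j / m : ℕ) * (2*π) := by
    rw [hj]; field_simp; ring
  unfold ed
  rw [hang, Real.cos_add_nat_mul_two_pi, Real.sin_add_nat_mul_two_pi]

lemma dot_pt_ed (m : ℕ) (hm : m ≠ 0) (k D : ℕ) :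
    dot (pt m (k + D)) (ed m k) = Real.cos (π*(2*D-1)/m) := by
  have hm' : (m:ℝ) ≠ 0 := Nat.cast_ne_zero.2 hm
  unfold pt ed
  rw [dot_cis]
  congr 1
  push_cast
  field_simp
  ring

lemma dot_pt_pt (m : ℕ) (hm : m ≠ 0) (j D : ℕ) :
    dot (pt m (j + D)) (pt m j) = Real.cos (2*π*D/m) := by
  have hm' : (m:ℝ) ≠ 0 := Nat.cast_ne_zero.2 hm
  unfold pt
  rw [dot_cis]
  congr 1
  push_cast
  field_simp
  ring

lemma dot_pt_self (m j : ℕ) : dot (pt m j) (pt m j) = 1 := by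
  unfold pt
  rw [dot_cis, sub_self, Real.cos_zero]

lemma cos_lt_cos' {a t : ℝ} (ha0 : 0 ≤ a) (haπ : a ≤ π) (h1 : a < t) (h2 : t < 2*π - a) :
    Real.cos t < Real.cos a := by
  rcases le_or_gt t π with h | h
  · exact Real.strictAntiOn_cos ⟨ha0, haπ⟩ ⟨by linarith, h⟩ h1
  · rw [← Real.cos_two_pi_sub t]
    exact Real.strictAntiOn_cos ⟨ha0, haπ⟩ ⟨by linarith, by linarith⟩ (by linarith)

lemma cos_D_lt_one {m : ℕ} (hm4 : 4 ≤ m) {D : ℕ} (hD1 : 1 ≤ D) (hDm : D < m) :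
    Real.cos (2*π*D/m) < 1 := by
  have hmR : (0:ℝ) < m := by exact_mod_cast (show 0 < m by omega)
  have hDR : (D:ℝ) < m := by exact_mod_cast hDm
  have hD1R : (1:ℝ) ≤ D := by exact_mod_cast hD1
  rw [← Real.cos_zero]
  apply cos_lt_cos' le_rfl Real.pi_pos.le
  · have : 0 < 2*π*D := by nlinarith [Real.pi_pos]
    positivity
  · rw [sub_zero, div_lt_iff₀ hmR]
    nlinarith [Real.pi_pos]

lemma cos_edge_lt {m : ℕ} (hm4 : 4 ≤ m) {D : ℕ} (hD2 : 2 ≤ D) (hDm : D < m) :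
    Real.cos (π*(2*D-1)/m) < Real.cos (π/m) := by
  have hmR : (0:ℝ) < m := by exact_mod_cast (show 0 < m by omega)
  have hm' : (m:ℝ) ≠ 0 := ne_of_gt hmR
  have hDR : (D:ℝ) < m := by exact_mod_cast hDm
  have hD2R : (2:ℝ) ≤ D := by exact_mod_cast hD2
  have hm1 : (1:ℝ) ≤ m := by linarith
  apply cos_lt_cos'
  · positivity
  · exact div_le_self Real.pi_pos.le hm1
  · rw [div_lt_div_iff₀ hmR hmR]
    nlinarith [mul_pos (mul_pos Real.pi_pos hmR) (show (0:ℝ) < 2*(D:ℝ)-2 by linarith)]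
  · rw [div_lt_iff₀ hmR, sub_mul, div_mul_cancel₀ _ hm']
    nlinarith [Real.pi_pos]

lemma ed_antipode {m t : ℕ} (ht : t ≠ 0) (hE : m = 2*t) (k : ℕ) :
    ed m (k + t) = - ed m k := by
  have hm : m ≠ 0 := by omega
  have hm' : (m:ℝ) ≠ 0 := Nat.cast_ne_zero.2 hm
  have hang : π*(2*((k:ℝ)+t)+1)/m = π*(2*k+1)/m + π := by
    have htm : (m:ℝ) = 2*t := by exact_mod_cast hE
    rw [htm]
    have ht' : (t:ℝ) ≠ 0 := Nat.cast_ne_zero.2 ht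
    field_simp
    ring
  unfold ed
  push_cast
  rw [hang, Real.cos_add_pi, Real.sin_add_pi]
  rfl

lemma pt_ne {m : ℕ} (hm4 : 4 ≤ m) {i j : ℕ} (hj : j < m) (hij : i < j) :
    pt m j ≠ pt m i := by
  intro heq
  have hm : m ≠ 0 := by omega
  have hD : j = i + (j - i) := by omega
  have h1 : dot (pt m (i + (j - i))) (pt m i) = Real.cos (2*π*((j-i : ℕ) : ℝ)/m) :=
    dot_pt_pt m hm i (j - i)
  rw [← hD, heq, dot_pt_self] at h1
  have h2 := cos_D_lt_one hm4 (by omega : 1 ≤ j - i) (by omega : j - i < m)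
  linarith

lemma pt_injOn {m : ℕ} (hm4 : 4 ≤ m) : ∀ i < m, ∀ j < m, pt m i = pt m j → i = j := by
  intro i hi j hj heq
  by_contra hne
  rcases lt_or_gt_of_ne hne with h | h
  · exact pt_ne hm4 hj h heq.symm
  · exact pt_ne hm4 hi h heq


noncomputable def Sfin (m : ℕ) : Finset (ℝ × ℝ) := (Finset.range m).image (pt m)

lemma mem_Sfin {m : ℕ} {x : ℝ × ℝ} : x ∈ Sfin m ↔ ∃ j, j < m ∧ pt m j = x := by
  simp [Sfin, Finset.mem_image, Finset.mem_range]

lemma pt_mem_Sfin {m j : ℕ} (hj : j < m) : pt m j ∈ Sfin m :=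
  mem_Sfin.2 ⟨j, hj, rfl⟩

lemma card_Sfin {m : ℕ} (hm4 : 4 ≤ m) : (Sfin m).card = m := by
  rw [Sfin, Finset.card_image_of_injOn, Finset.card_range]
  intro i hi j hj h
  exact pt_injOn hm4 i (Finset.mem_range.1 hi) j (Finset.mem_range.1 hj) h

lemma dot_comm (x y : ℝ × ℝ) : dot x y = dot y x := by simp [dot]; ring

lemma dot_pt_pt_lt {m : ℕ} (hm4 : 4 ≤ m) {i j : ℕ} (hi : i < m) (hj : j < m)
    (hij : i ≠ j) : dot (pt m i) (pt m j) < 1 := by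
  have hm : m ≠ 0 := by omega
  rcases lt_or_gt_of_ne hij with h | h
  · -- i < j : j = i + (j - i)
    rw [dot_comm, show j = i + (j - i) by omega, dot_pt_pt m hm]
    exact cos_D_lt_one hm4 (by omega) (by omega)
  · rw [show i = j + (i - j) by omega, dot_pt_pt m hm]
    exact cos_D_lt_one hm4 (by omega) (by omega)

lemma dot_lt_one_of_ne {m : ℕ} (hm4 : 4 ≤ m) {w : ℝ × ℝ} (hw : w ∈ Sfin m) {j : ℕ}
    (hj : j < m) (hne : w ≠ pt m j) : dot w (pt m j) < 1 := by
  obtain ⟨i, hi, rfl⟩ := mem_Sfin.1 hw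
  exact dot_pt_pt_lt hm4 hi hj (fun h => hne (by rw [h]))

/-- index shift: express `pt m i` in the form `pt m (k + D)` with `D < m`. -/
lemma pt_shift {m : ℕ} (hm4 : 4 ≤ m) {i k : ℕ} (hi : i < m) (hk : k < m) :
    ∃ D, D < m ∧ pt m i = pt m (k + D) ∧ ((i = k) ↔ D = 0) ∧ ((i = (k+1) % m) ↔ D = 1) := by
  have hm : m ≠ 0 := by omega
  have hk1 : ((k+1) % m = k+1 ∧ k+1 < m) ∨ (k+1 = m ∧ (k+1) % m = 0) := by
    rcases Nat.lt_or_ge (k+1) m with h | h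
    · exact Or.inl ⟨Nat.mod_eq_of_lt h, h⟩
    · have : k + 1 = m := by omega
      exact Or.inr ⟨this, by rw [this, Nat.mod_self]⟩
  rcases le_or_gt k i with h | h
  · refine ⟨i - k, by omega, by rw [show k + (i - k) = i by omega], by omega, ?_⟩
    rcases hk1 with ⟨h1, h2⟩ | ⟨h1, h2⟩ <;> omega
  · refine ⟨i + m - k, by omega, ?_, by omega, ?_⟩
    · rw [show k + (i + m - k) = i + m by omega, ← pt_mod m hm (i + m),
        Nat.add_mod_right, Nat.mod_eq_of_lt hi]
    · rcases hk1 with ⟨h1, h2⟩ | ⟨h1, h2⟩ <;> omega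

lemma dot_pt_ed_eq {m : ℕ} (hm4 : 4 ≤ m) {i k : ℕ} (hi : i < m) (hk : k < m)
    (h : i = k ∨ i = (k+1) % m) : dot (pt m i) (ed m k) = Real.cos (π/m) := by
  have hm : m ≠ 0 := by omega
  obtain ⟨D, hDm, hpt, h0, h1⟩ := pt_shift hm4 hi hk
  rw [hpt, dot_pt_ed m hm]
  rcases h with h | h
  · rw [h0.1 h]
    norm_num
    rw [show -π / (m:ℝ) = -(π/m) by ring, Real.cos_neg]
  · rw [h1.1 h]
    norm_num

lemma dot_pt_ed_lt {m : ℕ} (hm4 : 4 ≤ m) {i k : ℕ} (hi : i < m) (hk : k < m)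
    (h0 : i ≠ k) (h1 : i ≠ (k+1) % m) : dot (pt m i) (ed m k) < Real.cos (π/m) := by
  have hm : m ≠ 0 := by omega
  obtain ⟨D, hDm, hpt, hc0, hc1⟩ := pt_shift hm4 hi hk
  rw [hpt, dot_pt_ed m hm]
  exact cos_edge_lt hm4 (by omega) hDm

lemma dot_pt_ed_le {m : ℕ} (hm4 : 4 ≤ m) {i k : ℕ} (hi : i < m) (hk : k < m) :
    dot (pt m i) (ed m k) ≤ Real.cos (π/m) := by
  by_cases h : i = k ∨ i = (k+1) % m
  · exact le_of_eq (dot_pt_ed_eq hm4 hi hk h)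
  · push_neg at h
    exact le_of_lt (dot_pt_ed_lt hm4 hi hk h.1 h.2)

lemma cos_pi_div_pos {m : ℕ} (hm4 : 4 ≤ m) : 0 < Real.cos (π/m) := by
  have hmR : (4:ℝ) ≤ m := by exact_mod_cast hm4
  apply Real.cos_pos_of_mem_Ioo
  constructor
  · have : 0 < π/(m:ℝ) := by positivity
    linarith [Real.pi_pos]
  · have h1 : π/(m:ℝ) ≤ π/4 := by
      apply div_le_div_of_nonneg_left Real.pi_pos.le (by norm_num) hmR
    linarith [Real.pi_pos]

lemma ed_ne_zero {m k : ℕ} : ed m k ≠ 0 := by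
  intro h
  have h1 : dot (ed m k) (ed m k) = 1 := by
    rw [ed, dot_cis, sub_self, Real.cos_zero]
  rw [h] at h1
  simp [dot] at h1

lemma pt_ne_zero {m j : ℕ} : pt m j ≠ 0 := by
  intro h
  have h1 := dot_pt_self m j
  rw [h] at h1
  simp [dot] at h1


lemma convexPos_of_sep (T : Finset (ℝ × ℝ))
    (h : ∀ q ∈ T, ∃ u r, dot q u = r ∧ (∀ y ∈ T.erase q, dot y u ≤ r) ∧
      (∀ y ∈ T.erase q, ∀ z ∈ T.erase q, dot y u = r → dot z u = r → y = z)) :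
    ConvexPos T := by
  intro q hq hmem
  obtain ⟨u, r, hqu, hle, huniq⟩ := h q hq
  exact Finset.notMem_erase q T (sep_lemma (T.erase q) u r hle huniq q hqu hmem)

lemma not_wbtw {m : ℕ} (hm4 : 4 ≤ m) {x y z : ℝ × ℝ} (hx : x ∈ Sfin m) (hy : y ∈ Sfin m)
    (hz : z ∈ Sfin m) (hyx : y ≠ x) (hyz : y ≠ z) : ¬ Wbtw ℝ x y z := by
  intro hw
  obtain ⟨j, hj, rfl⟩ := mem_Sfin.1 hy
  have hlt : ∀ w ∈ ({x, z} : Finset (ℝ × ℝ)), dot w (pt m j) < 1 := by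
    intro w hw'
    rcases Finset.mem_insert.1 hw' with rfl | h
    · exact dot_lt_one_of_ne hm4 hx hj (Ne.symm hyx)
    · rw [Finset.mem_singleton.1 h]
      exact dot_lt_one_of_ne hm4 hz hj (Ne.symm hyz)
  have hseg : pt m j ∈ convexHull ℝ (({x, z} : Finset (ℝ × ℝ)) : Set (ℝ × ℝ)) := by
    rw [Finset.coe_insert, Finset.coe_singleton, convexHull_pair]
    exact hw.mem_segment
  have hmem := sep_lemma {x, z} (pt m j) 1 (fun w hw' => (hlt w hw').le)
    (fun w hw' _ _ h1 _ => absurd h1 (ne_of_lt (hlt w hw'))) (pt m j) (dot_pt_self m j) hseg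
  rcases Finset.mem_insert.1 hmem with h | h
  · exact hyx h
  · exact hyz (Finset.mem_singleton.1 h)

lemma genpos_Sfin {m : ℕ} (hm4 : 4 ≤ m) : GenPos (Sfin m) := by
  intro a ha b hb c hc hab hac hbc hcol
  rcases hcol.wbtw_or_wbtw_or_wbtw with h | h | h
  · exact not_wbtw hm4 ha hb hc (Ne.symm hab) hbc h
  · exact not_wbtw hm4 hb hc ha (Ne.symm hbc) (Ne.symm hac) h
  · exact not_wbtw hm4 hc ha hb hac hab h

lemma hull_dot_lt_one {m : ℕ} (hm4 : 4 ≤ m) {p : ℝ × ℝ} (hp : p ∉ Sfin m)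
    (hin : p ∈ convexHull ℝ ((Sfin m : Finset (ℝ × ℝ)) : Set (ℝ × ℝ))) {j : ℕ} (hj : j < m) :
    dot p (pt m j) < 1 := by
  have hle : ∀ y ∈ Sfin m, dot y (pt m j) ≤ 1 := by
    intro y hy
    obtain ⟨i, hi, rfl⟩ := mem_Sfin.1 hy
    by_cases h : i = j
    · rw [h, dot_pt_self]
    · exact (dot_pt_pt_lt hm4 hi hj h).le
  have h1 : dot p (pt m j) ≤ 1 := hull_le hle p hin
  rcases lt_or_eq_of_le h1 with h | h
  · exact h
  · exfalso
    apply hp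
    apply sep_lemma (Sfin m) (pt m j) 1 hle ?_ p h hin
    intro y hy z hz h1' h2'
    have hyj : y = pt m j := by
      obtain ⟨i, hi, rfl⟩ := mem_Sfin.1 hy
      by_contra hne
      exact absurd h1' (ne_of_lt (dot_lt_one_of_ne hm4 (pt_mem_Sfin hi) hj hne))
    have hzj : z = pt m j := by
      obtain ⟨i, hi, rfl⟩ := mem_Sfin.1 hz
      by_contra hne
      exact absurd h2' (ne_of_lt (dot_lt_one_of_ne hm4 (pt_mem_Sfin hi) hj hne))
    rw [hyj, hzj]

lemma succ_mod_lt {m k : ℕ} (hm4 : 4 ≤ m) : (k+1) % m < m := Nat.mod_lt _ (by omega)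

lemma succ_mod_ne {m k : ℕ} (hm4 : 4 ≤ m) (hk : k < m) : (k+1) % m ≠ k := by
  rcases Nat.lt_or_ge (k+1) m with h | h
  · rw [Nat.mod_eq_of_lt h]; omega
  · have h1 : k + 1 = m := by omega
    rw [h1, Nat.mod_self]; omega

lemma mod_succ_eq {m x : ℕ} (hm4 : 4 ≤ m) : (x % m + 1) % m = (x + 1) % m := by
  conv_rhs => rw [Nat.add_mod]
  rw [Nat.one_mod_eq_one.2 (by omega)]

lemma pred_succ_mod {m j : ℕ} (hm4 : 4 ≤ m) (hj : j < m) :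
    ((j + m - 1) % m + 1) % m = j := by
  rw [mod_succ_eq hm4, show j + m - 1 + 1 = j + m by omega, Nat.add_mod_right,
    Nat.mod_eq_of_lt hj]


lemma inside_branch {n m : ℕ} (hn : 4 ≤ n) (hmn : m = 2*n - 4) {p : ℝ × ℝ}
    (hp : p ∉ Sfin m)
    (hin : p ∈ convexHull ℝ ((Sfin m : Finset (ℝ × ℝ)) : Set (ℝ × ℝ)))
    (u : ℝ × ℝ) (hu0 : dot (pt m 0) u = dot p u)
    (hbig : n - 2 ≤ ((Finset.range m).filter
      (fun j => j ≠ 0 ∧ dot (pt m j) u < dot p u)).card) :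
    ∃ T ⊆ insert p (Sfin m), p ∈ T ∧ T.card = n ∧ ConvexPos T := by
  classical
  have hm4 : 4 ≤ m := by omega
  obtain ⟨B, hBsub, hBcard⟩ := Finset.exists_subset_card_eq hbig
  have hBfact : ∀ j ∈ B, j < m ∧ j ≠ 0 ∧ dot (pt m j) u < dot p u := by
    intro j hj
    have h1 := hBsub hj
    simp only [Finset.mem_filter, Finset.mem_range] at h1
    exact ⟨h1.1, h1.2.1, h1.2.2⟩
  set T : Finset (ℝ × ℝ) := insert p (insert (pt m 0) (B.image (pt m))) with hT
  have hmemT : ∀ y ∈ T, y = p ∨ ∃ i, i < m ∧ (i = 0 ∨ i ∈ B) ∧ y = pt m i := by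
    intro y hy
    rw [hT, Finset.mem_insert, Finset.mem_insert, Finset.mem_image] at hy
    rcases hy with rfl | rfl | ⟨i, hi, rfl⟩
    · exact Or.inl rfl
    · exact Or.inr ⟨0, by omega, Or.inl rfl, rfl⟩
    · exact Or.inr ⟨i, (hBfact i hi).1, Or.inr hi, rfl⟩
  have hsubS : ∀ y ∈ T, y = p ∨ y ∈ Sfin m := by
    intro y hy
    rcases hmemT y hy with h | ⟨i, hi, _, rfl⟩
    · exact Or.inl h
    · exact Or.inr (pt_mem_Sfin hi)
  refine ⟨T, ?_, ?_, ?_, ?_⟩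
  · intro y hy
    rcases hsubS y hy with rfl | h
    · exact Finset.mem_insert_self _ _
    · exact Finset.mem_insert_of_mem h
  · exact Finset.mem_insert_self _ _
  · have himg : (B.image (pt m)).card = n - 2 := by
      rw [Finset.card_image_of_injOn, hBcard]
      intro a ha b hb hab
      exact pt_injOn hm4 a (hBfact a ha).1 b (hBfact b hb).1 hab
    have h0img : pt m 0 ∉ B.image (pt m) := by
      rw [Finset.mem_image]
      rintro ⟨i, hi, hieq⟩
      exact (hBfact i hi).2.1 (pt_injOn hm4 i (hBfact i hi).1 0 (by omega) hieq)
    have hpnot : p ∉ insert (pt m 0) (B.image (pt m)) := by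
      intro hmem
      rcases Finset.mem_insert.1 hmem with heq | hmem'
      · exact hp (heq ▸ pt_mem_Sfin (show 0 < m by omega))
      · rw [Finset.mem_image] at hmem'
        obtain ⟨i, hi, heq⟩ := hmem'
        exact hp (heq ▸ pt_mem_Sfin (hBfact i hi).1)
    rw [hT, Finset.card_insert_of_notMem hpnot, Finset.card_insert_of_notMem h0img, himg]
    omega
  · apply convexPos_of_sep
    intro q hq
    rcases hmemT q hq with rfl | ⟨i, hi, hcase, rfl⟩
    · refine ⟨u, dot q u, rfl, ?_, ?_⟩
      · intro y hy
        rcases hmemT y (Finset.mem_of_mem_erase hy) with heq | ⟨i, hi, hcase, rfl⟩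
        · exact absurd heq (Finset.ne_of_mem_erase hy)
        · rcases hcase with rfl | hiB
          · exact hu0.le
          · exact ((hBfact i hiB).2.2).le
      · intro y hy z hz h1 h2
        have key : ∀ w ∈ T.erase q, dot w u = dot q u → w = pt m 0 := by
          intro w hw hweq
          rcases hmemT w (Finset.mem_of_mem_erase hw) with heq | ⟨i, hi, hcase, rfl⟩
          · exact absurd heq (Finset.ne_of_mem_erase hw)
          · rcases hcase with rfl | hiB
            · rfl
            · exact absurd hweq (ne_of_lt (hBfact i hiB).2.2)
        rw [key y hy h1, key z hz h2]
    · rcases hcase with rfl | hiB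
      · refine ⟨u, dot p u, hu0, ?_, ?_⟩
        · intro y hy
          rcases hmemT y (Finset.mem_of_mem_erase hy) with heq | ⟨i', hi', hcase', rfl⟩
          · rw [heq]
          · rcases hcase' with rfl | hiB'
            · exact absurd rfl (Finset.ne_of_mem_erase hy)
            · exact ((hBfact i' hiB').2.2).le
        · intro y hy z hz h1 h2
          have key : ∀ w ∈ T.erase (pt m 0), dot w u = dot p u → w = p := by
            intro w hw hweq
            rcases hmemT w (Finset.mem_of_mem_erase hw) with heq | ⟨i', hi', hcase', rfl⟩
            · exact heq
            · rcases hcase' with rfl | hiB'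
              · exact absurd rfl (Finset.ne_of_mem_erase hw)
              · exact absurd hweq (ne_of_lt (hBfact i' hiB').2.2)
          rw [key y hy h1, key z hz h2]
      · have hlt : ∀ w ∈ T.erase (pt m i), dot w (pt m i) < 1 := by
          intro w hw
          have hwne : w ≠ pt m i := Finset.ne_of_mem_erase hw
          rcases hsubS w (Finset.mem_of_mem_erase hw) with heq | hwS
          · rw [heq]; exact hull_dot_lt_one hm4 hp hin hi
          · exact dot_lt_one_of_ne hm4 hwS hi hwne
        exact ⟨pt m i, 1, dot_pt_self m i, fun w hw => (hlt w hw).le,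
          fun y hy z hz h1 _ => absurd h1 (ne_of_lt (hlt y hy))⟩


lemma exists_succ_not_mem {m : ℕ} (hm4 : 4 ≤ m) {J : Finset ℕ} (hJsub : J ⊆ Finset.range m)
    (hJne : J.Nonempty) (hJcard : J.card < m) :
    ∃ k ∈ J, (k+1) % m ∉ J := by
  by_contra hcon
  push_neg at hcon
  obtain ⟨j0, hj0⟩ := hJne
  have hj0m : j0 < m := Finset.mem_range.1 (hJsub hj0)
  have hall : ∀ i, (j0 + i) % m ∈ J := by
    intro i
    induction i with
    | zero => simpa [Nat.mod_eq_of_lt hj0m] using hj0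
    | succ i ih =>
        have h1 := hcon _ ih
        rwa [mod_succ_eq hm4, show j0 + i + 1 = j0 + (i+1) by omega] at h1
  have hsub : Finset.range m ⊆ J := by
    intro k hk
    have hkm : k < m := Finset.mem_range.1 hk
    have h1 := hall (m + k - j0)
    rwa [show j0 + (m + k - j0) = m + k by omega, Nat.add_mod_left,
      Nat.mod_eq_of_lt hkm] at h1
  have h2 := Finset.card_le_card hsub
  rw [Finset.card_range] at h2
  omega

lemma mod_add_cancel {m t a b : ℕ} (ha : a < m) (hb : b < m)
    (h : (a + t) % m = (b + t) % m) : a = b := by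
  have h1 : a % m = b % m := Nat.ModEq.add_right_cancel' t h
  rwa [Nat.mod_eq_of_lt ha, Nat.mod_eq_of_lt hb] at h1

lemma outside_branch {n m : ℕ} (hn : 4 ≤ n) (hmn : m = 2*n - 4) {p : ℝ × ℝ}
    (hp : p ∉ Sfin m) (hgen : GenPos (insert p (Sfin m)))
    (hout : p ∉ convexHull ℝ ((Sfin m : Finset (ℝ × ℝ)) : Set (ℝ × ℝ))) :
    ∃ T ⊆ insert p (Sfin m), p ∈ T ∧ T.card = n ∧ ConvexPos T := by
  classical
  have hm4 : 4 ≤ m := by omega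
  have hm0 : m ≠ 0 := by omega
  set c := Real.cos (π/m) with hc
  have hcpos : 0 < c := cos_pi_div_pos hm4
  have htri : ∀ k, k < m → dot p (ed m k) ≠ c := by
    intro k hk heq
    have hk1 := succ_mod_lt (m := m) (k := k) hm4
    have hne := succ_mod_ne hm4 hk
    have hcol := collinear_of_dot (ed_ne_zero (m := m) (k := k)) heq
      (dot_pt_ed_eq hm4 hk hk (Or.inl rfl))
      (dot_pt_ed_eq hm4 hk1 hk (Or.inr rfl))
    have hpk : p ≠ pt m k := fun h => hp (h ▸ pt_mem_Sfin hk)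
    have hpk1 : p ≠ pt m ((k+1) % m) := fun h => hp (h ▸ pt_mem_Sfin hk1)
    have hkk1 : pt m k ≠ pt m ((k+1) % m) := by
      intro h
      exact hne (pt_injOn hm4 k hk _ hk1 h).symm
    exact hgen p (Finset.mem_insert_self _ _) (pt m k)
      (Finset.mem_insert_of_mem (pt_mem_Sfin hk)) (pt m ((k+1) % m))
      (Finset.mem_insert_of_mem (pt_mem_Sfin hk1)) hpk hpk1 hkk1 hcol
  set J := (Finset.range m).filter (fun k => c < dot p (ed m k)) with hJdef
  have hJmem : ∀ k ∈ J, k < m ∧ c < dot p (ed m k) := by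
    intro k hk
    have h1 := Finset.mem_filter.1 hk
    exact ⟨Finset.mem_range.1 h1.1, h1.2⟩
  have hJsub : J ⊆ Finset.range m := by
    rw [hJdef]; exact Finset.filter_subset _ _
  have hJm : J.card ≤ m := by
    have := Finset.card_le_card hJsub
    rwa [Finset.card_range] at this
  have hJcard : J.card ≤ n - 2 := by
    have hmaps : ∀ k ∈ J, (k + (n-2)) % m ∈ Finset.range m \ J := by
      intro k hk
      obtain ⟨hkm, hkd⟩ := hJmem k hk
      rw [Finset.mem_sdiff, Finset.mem_range]
      refine ⟨Nat.mod_lt _ (by omega), ?_⟩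
      rw [hJdef, Finset.mem_filter]
      rintro ⟨-, hlt⟩
      rw [ed_mod m hm0, ed_antipode (t := n-2) (by omega) (by omega) k, dot_neg] at hlt
      linarith
    have hinj : Set.InjOn (fun k => (k + (n-2)) % m) J := by
      intro a ha b hb hab
      exact mod_add_cancel (hJmem a (by exact_mod_cast ha)).1
        (hJmem b (by exact_mod_cast hb)).1 hab
    have h1 := Finset.card_le_card_of_injOn _ hmaps hinj
    have h2 : (Finset.range m \ J).card = m - J.card := by
      rw [Finset.card_sdiff_of_subset hJsub, Finset.card_range]
    omega
  set Bad := J.filter (fun j => (j + m - 1) % m ∈ J) with hBaddef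
  have hBadsub : Bad ⊆ J := by
    rw [hBaddef]; exact Finset.filter_subset _ _
  have hBadcard : Bad.card ≤ n - 3 := by
    rcases Finset.eq_empty_or_nonempty Bad with hBe | hBne
    · rw [hBe]; simp
    · obtain ⟨j0, hj0⟩ := hBne
      have hJne : J.Nonempty := ⟨j0, hBadsub hj0⟩
      obtain ⟨k1, hk1J, hk1succ⟩ := exists_succ_not_mem hm4 hJsub hJne (by omega)
      have hmaps : ∀ j ∈ Bad, (j + m - 1) % m ∈ J.erase k1 := by
        intro j hj
        have hjJ := hBadsub hj
        have hjprev : (j + m - 1) % m ∈ J := by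
          have := Finset.mem_filter.1 (hBaddef ▸ hj)
          exact this.2
        rw [Finset.mem_erase]
        refine ⟨?_, hjprev⟩
        intro heq
        apply hk1succ
        rw [← heq, pred_succ_mod hm4 (hJmem j hjJ).1]
        exact hjJ
      have hinj : Set.InjOn (fun j => (j + m - 1) % m) Bad := by
        intro a ha b hb hab
        have haJ := hBadsub (by exact_mod_cast ha)
        have hbJ := hBadsub (by exact_mod_cast hb)
        simp only at hab
        rw [show a + m - 1 = a + (m-1) by omega, show b + m - 1 = b + (m-1) by omega] at hab
        exact mod_add_cancel (hJmem a haJ).1 (hJmem b hbJ).1 hab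
      have h1 := Finset.card_le_card_of_injOn _ hmaps hinj
      have h2 : (J.erase k1).card = J.card - 1 := Finset.card_erase_of_mem hk1J
      have h3 : 1 ≤ J.card := Finset.card_pos.2 hJne
      omega
  set Good := (Finset.range m).filter
      (fun j => dot p (ed m j) < c ∨ dot p (ed m ((j + m - 1) % m)) < c) with hGooddef
  have hGoodmem : ∀ j ∈ Good,
      j < m ∧ (dot p (ed m j) < c ∨ dot p (ed m ((j + m - 1) % m)) < c) := by
    intro j hj
    have h1 := Finset.mem_filter.1 (hGooddef ▸ hj)
    exact ⟨Finset.mem_range.1 h1.1, h1.2⟩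
  have hGoodcard : n - 1 ≤ Good.card := by
    have hsub : Finset.range m \ Bad ⊆ Good := by
      intro j hj
      rw [Finset.mem_sdiff] at hj
      obtain ⟨hjr, hjBad⟩ := hj
      have hjm := Finset.mem_range.1 hjr
      have hprevm : (j + m - 1) % m < m := Nat.mod_lt _ (by omega)
      rw [hGooddef, Finset.mem_filter]
      refine ⟨hjr, ?_⟩
      by_cases hjJ : j ∈ J
      · have hprev : (j + m - 1) % m ∉ J := by
          intro hmem
          have hBadmem : j ∈ Bad := by
            rw [hBaddef, Finset.mem_filter]
            exact ⟨hjJ, hmem⟩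
          exact hjBad hBadmem
        right
        rcases lt_trichotomy (dot p (ed m ((j + m - 1) % m))) c with h | h | h
        · exact h
        · exact absurd h (htri _ hprevm)
        · exfalso
          apply hprev
          rw [hJdef, Finset.mem_filter]
          exact ⟨Finset.mem_range.2 hprevm, h⟩
      · left
        rcases lt_trichotomy (dot p (ed m j)) c with h | h | h
        · exact h
        · exact absurd h (htri j hjm)
        · exfalso
          apply hjJ
          rw [hJdef, Finset.mem_filter]
          exact ⟨hjr, h⟩
    have h1 := Finset.card_le_card hsub
    have h2 : (Finset.range m \ Bad).card = m - Bad.card := by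
      rw [Finset.card_sdiff_of_subset (hBadsub.trans hJsub), Finset.card_range]
    have h3 : Bad.card ≤ m := by
      have := Finset.card_le_card (hBadsub.trans hJsub)
      rwa [Finset.card_range] at this
    omega
  obtain ⟨B, hBsub, hBcard⟩ := Finset.exists_subset_card_eq (show n - 1 ≤ Good.card by omega)
  have hBfact : ∀ j ∈ B, j < m ∧
      ∃ k, k < m ∧ (j = k ∨ j = (k+1) % m) ∧ dot p (ed m k) < c := by
    intro j hj
    have h1 := hGoodmem j (hBsub hj)
    refine ⟨h1.1, ?_⟩
    rcases h1.2 with h | h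
    · exact ⟨j, h1.1, Or.inl rfl, h⟩
    · exact ⟨(j + m - 1) % m, Nat.mod_lt _ (by omega),
        Or.inr (pred_succ_mod hm4 h1.1).symm, h⟩
  set T : Finset (ℝ × ℝ) := insert p (B.image (pt m)) with hT
  have hmemT : ∀ y ∈ T, y = p ∨ ∃ i, i ∈ B ∧ i < m ∧ y = pt m i := by
    intro y hy
    rw [hT, Finset.mem_insert, Finset.mem_image] at hy
    rcases hy with rfl | ⟨i, hi, rfl⟩
    · exact Or.inl rfl
    · exact Or.inr ⟨i, hi, (hBfact i hi).1, rfl⟩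
  refine ⟨T, ?_, Finset.mem_insert_self _ _, ?_, ?_⟩
  · intro y hy
    rcases hmemT y hy with rfl | ⟨i, hiB, him, rfl⟩
    · exact Finset.mem_insert_self _ _
    · exact Finset.mem_insert_of_mem (pt_mem_Sfin him)
  · have himg : (B.image (pt m)).card = n - 1 := by
      rw [Finset.card_image_of_injOn, hBcard]
      intro a ha b hb hab
      exact pt_injOn hm4 a (hBfact a ha).1 b (hBfact b hb).1 hab
    have hpnot : p ∉ B.image (pt m) := by
      rw [Finset.mem_image]
      rintro ⟨i, hi, heq⟩
      exact hp (heq ▸ pt_mem_Sfin (hBfact i hi).1)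
    rw [hT, Finset.card_insert_of_notMem hpnot, himg]
    omega
  · apply convexPos_of_sep
    intro q hq
    rcases hmemT q hq with rfl | ⟨j, hjB, hjm, rfl⟩
    · obtain ⟨f, s, hfs, hsp⟩ := _root_.geometric_hahn_banach_closed_point
        (convex_convexHull ℝ _) ((Sfin m).finite_toSet.isClosed_convexHull (𝕜 := ℝ)) hout
      set u : ℝ × ℝ := (f (1,0), f (0,1)) with hu
      have hfd : ∀ x : ℝ × ℝ, f x = dot x u := by
        intro x
        have hx : x = x.1 • ((1:ℝ),(0:ℝ)) + x.2 • ((0:ℝ),(1:ℝ)) := by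
          simp [Prod.ext_iff]
        conv_lhs => rw [hx]
        rw [map_add, map_smul, map_smul]
        simp [hu, dot, smul_eq_mul]
      have hlt : ∀ y ∈ T.erase q, dot y u < dot q u := by
        intro y hy
        rcases hmemT y (Finset.mem_of_mem_erase hy) with heq | ⟨i, hiB, him, rfl⟩
        · exact absurd heq (Finset.ne_of_mem_erase hy)
        · have h1 : f (pt m i) < s :=
            hfs _ (subset_convexHull ℝ _ (Finset.mem_coe.2 (pt_mem_Sfin him)))
          rw [hfd] at h1
          have h2 : s < f q := hsp
          rw [hfd] at h2
          linarith
      exact ⟨u, dot q u, rfl, fun y hy => (hlt y hy).le,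
        fun y hy z hz h1 _ => absurd h1 (ne_of_lt (hlt y hy))⟩
    · obtain ⟨k, hkm, hjk, hklt⟩ := (hBfact j hjB).2
      have hk1m : (k+1) % m < m := succ_mod_lt hm4
      refine ⟨ed m k, c, dot_pt_ed_eq hm4 hjm hkm hjk, ?_, ?_⟩
      · intro y hy
        rcases hmemT y (Finset.mem_of_mem_erase hy) with heq | ⟨i, hiB, him, rfl⟩
        · rw [heq]; exact hklt.le
        · exact dot_pt_ed_le hm4 him hkm
      · intro y hy z hz h1 h2
        have key : ∀ w ∈ T.erase (pt m j), dot w (ed m k) = c →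
            (w = pt m k ∨ w = pt m ((k+1) % m)) ∧ w ≠ pt m j := by
          intro w hw hweq
          have hwne : w ≠ pt m j := Finset.ne_of_mem_erase hw
          refine ⟨?_, hwne⟩
          rcases hmemT w (Finset.mem_of_mem_erase hw) with heq | ⟨i, hiB, him, rfl⟩
          · rw [heq] at hweq
            exact absurd hweq (ne_of_lt hklt)
          · by_contra hcontra
            push_neg at hcontra
            have hik : i ≠ k := fun h => hcontra.1 (by rw [h])
            have hik1 : i ≠ (k+1) % m := fun h => hcontra.2 (by rw [h])
            exact absurd hweq (ne_of_lt (dot_pt_ed_lt hm4 him hkm hik hik1))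
        obtain ⟨hy', hyne⟩ := key y hy h1
        obtain ⟨hz', hzne⟩ := key z hz h2
        rcases hjk with rfl | hj1
        · rcases hy' with hy'' | hy''
          · exact absurd hy'' hyne
          · rcases hz' with hz'' | hz''
            · exact absurd hz'' hzne
            · rw [hy'', hz'']
        · rcases hy' with hy'' | hy''
          · rcases hz' with hz'' | hz''
            · rw [hy'', hz'']
            · exact absurd (by rw [hz'', ← hj1]) hzne
          · exact absurd (by rw [hy'', ← hj1]) hyne

end ConvSatAux


open ConvSatAux in
/-- For `n ≥ 4`, there is a finite planar point set in general position with exactly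
`2n - 4` points that is semisaturated for convex `n`-sets. -/
theorem convex_semisat_upper_bound (n : ℕ) (hn : 4 ≤ n) :
    ∃ S : Finset (ℝ × ℝ), GenPos S ∧ S.card = 2 * n - 4 ∧ ConvSemiSat n S := by
  classical
  set m := 2 * n - 4 with hm
  have hm4 : 4 ≤ m := by omega
  have h0m : 0 < m := by omega
  refine ⟨Sfin m, genpos_Sfin hm4, card_Sfin hm4, ?_⟩
  intro p hp hgen
  by_cases hin : p ∈ convexHull ℝ ((Sfin m : Finset (ℝ × ℝ)) : Set (ℝ × ℝ))
  · have hw : pt m 0 ∈ Sfin m := pt_mem_Sfin h0m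
    have hwp : pt m 0 ≠ p := fun h => hp (h ▸ hw)
    set u0 : ℝ × ℝ := (-((pt m 0).2 - p.2), (pt m 0).1 - p.1) with hu0def
    have hu0w : dot (pt m 0) u0 = dot p u0 := by
      simp [dot, hu0def]; ring
    have hu0nz : u0 ≠ 0 := by
      intro h
      apply hwp
      have h1 : -((pt m 0).2 - p.2) = 0 := congrArg Prod.fst h
      have h2 : (pt m 0).1 - p.1 = 0 := congrArg Prod.snd h
      have e1 : (pt m 0).1 = p.1 := by linarith
      have e2 : (pt m 0).2 = p.2 := by linarith
      exact Prod.ext e1 e2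
    have hstrict : ∀ j, j < m → j ≠ 0 → dot (pt m j) u0 ≠ dot p u0 := by
      intro j hj hj0 heq
      have hcol := collinear_of_dot hu0nz (rfl : dot p u0 = dot p u0) hu0w heq
      have hpw : p ≠ pt m 0 := Ne.symm hwp
      have hppt : p ≠ pt m j := fun h => hp (h ▸ pt_mem_Sfin hj)
      have hwpt : pt m 0 ≠ pt m j := by
        intro h
        exact hj0 (pt_injOn hm4 0 h0m j hj h).symm
      exact hgen p (Finset.mem_insert_self _ _) (pt m 0) (Finset.mem_insert_of_mem hw)
        (pt m j) (Finset.mem_insert_of_mem (pt_mem_Sfin hj)) hpw hppt hwpt hcol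
    set A := (Finset.range m).filter (fun j => j ≠ 0 ∧ dot (pt m j) u0 < dot p u0) with hA
    set A' := (Finset.range m).filter (fun j => j ≠ 0 ∧ dot p u0 < dot (pt m j) u0) with hA'
    have hcover : (Finset.range m).erase 0 ⊆ A ∪ A' := by
      intro j hj
      have hj0 : j ≠ 0 := Finset.ne_of_mem_erase hj
      have hjm : j < m := Finset.mem_range.1 (Finset.mem_of_mem_erase hj)
      rcases lt_trichotomy (dot (pt m j) u0) (dot p u0) with h | h | h
      · apply Finset.mem_union_left
        rw [hA, Finset.mem_filter]
        exact ⟨Finset.mem_range.2 hjm, hj0, h⟩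
      · exact absurd h (hstrict j hjm hj0)
      · apply Finset.mem_union_right
        rw [hA', Finset.mem_filter]
        exact ⟨Finset.mem_range.2 hjm, hj0, h⟩
    have hcardcover : m - 1 ≤ A.card + A'.card := by
      have h1 := Finset.card_le_card hcover
      have h2 := Finset.card_union_le A A'
      have h3 : ((Finset.range m).erase 0).card = m - 1 := by
        rw [Finset.card_erase_of_mem (Finset.mem_range.2 h0m), Finset.card_range]
      omega
    by_cases hbig : n - 2 ≤ A.card
    · exact inside_branch hn hm hp hin u0 hu0w (hA ▸ hbig)
    · have hbig' : n - 2 ≤ A'.card := by omega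
      have hfilter : (Finset.range m).filter
          (fun j => j ≠ 0 ∧ dot (pt m j) (-u0) < dot p (-u0)) = A' := by
        rw [hA']
        apply Finset.filter_congr
        intro j _
        simp only [dot_neg, neg_lt_neg_iff]
      apply inside_branch hn hm hp hin (-u0) ?_ ?_
      · rw [dot_neg, dot_neg, hu0w]
      · rw [hfilter]
        exact hbig'
  · exact outside_branch hn hm hp hgen hin
end
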